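/- For every integer ℓ ≥ 1, let k = ⌈ℓ · log₂(3/2)⌉, let n_ℓ denote the number of vertices of T(u,v,k,ℓ), and let c_ℓ denote its number of proper 3-colorings. Then T(u,v,k,ℓ) is triangle-free and c_ℓ ≤ 64^(n_ℓ^(log 3 / log (9/2))), where the exponent log 3 / log (9/2) is the base-(9/2) logarithm of 3. In particular, for infinitely many integers n there exists an n-vertex triangle-free graph (namely one of the graphs T(u,v,k,ℓ)) with at most 64^(n^(log 3 / log (9/2))) proper 3-colorings. -/

import Mathlib

/-- The base relation for the graph `P(u,v,b)`: vertices are `Sum.inl 0 = u`,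
`Sum.inl 1 = v`, and `Sum.inr i = v_{i+1}` (0-indexed path vertices).
Edges: consecutive path vertices, `u` to odd-numbered path vertices `v₁, v₃, …`
(even 0-based index), and `v` to even-numbered ones `v₂, v₄, …`. -/
def PAdj (b : ℕ) : (Fin 2 ⊕ Fin b) → (Fin 2 ⊕ Fin b) → Prop
  | Sum.inr i, Sum.inr j => (j : ℕ) = (i : ℕ) + 1
  | Sum.inl x, Sum.inr i => (x : ℕ) = (i : ℕ) % 2
  | _, _ => False

/-- The graph `P(u,v,b)`. -/
def Pgraph (b : ℕ) : SimpleGraph (Fin 2 ⊕ Fin b) := SimpleGraph.fromRel (PAdj b)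

/-- The set of proper 3-colorings of a graph `G`. -/
def properColorings {V : Type*} (G : SimpleGraph V) : Set (V → Fin 3) :=
  {ψ | ∀ a b, G.Adj a b → ψ a ≠ ψ b}

/-- The type of "inner" vertices of `T(u,v,k,ℓ)` (all vertices except the two
special vertices `u, v`). At level `0` these are the `2^k` path vertices of
`P(u,v,2^k)`; at level `ℓ+1` they are the five path vertices `v₁,…,v₅` of the
base copy of `P(u,v,5)` together with the inner vertices of the three glued
copies of `T(·,·,k,ℓ)`. -/
def TInner (k : ℕ) : ℕ → Type
  | 0 => Fin (2 ^ k)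
  | ℓ + 1 => Fin 5 ⊕ (Fin 3 × TInner k ℓ)

/-- The vertex type of `T(u,v,k,ℓ)`: the special vertices `u = Sum.inl 0`,
`v = Sum.inl 1` together with the inner vertices. -/
abbrev TVert (k ℓ : ℕ) : Type := Fin 2 ⊕ TInner k ℓ

/-- The pair of path vertices of `P(u,v,5)` onto which the `c`-th copy of
`T(·,·,k,ℓ-1)` is glued: `(v₁,v₃)` for `c = 0`, `(v₂,v₄)` for `c = 1`,
`(v₃,v₅)` for `c = 2` (0-indexed). -/
def gluePair (c : Fin 3) : Fin 5 × Fin 5 :=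
  (⟨c.val, by omega⟩, ⟨c.val + 2, by have := c.isLt; omega⟩)

/-- The embedding of the `c`-th copy of `T(·,·,k,ℓ)` into `T(u,v,k,ℓ+1)`:
its special vertices are identified with the glue pair, and its inner vertices
are tagged with `c`. -/
def embedT (k ℓ : ℕ) (c : Fin 3) : TVert k ℓ → TVert k (ℓ + 1)
  | Sum.inl x => if x = 0 then Sum.inr (Sum.inl (gluePair c).1)
                 else Sum.inr (Sum.inl (gluePair c).2)
  | Sum.inr w => Sum.inr (Sum.inr (c, w))

/-- The embedding of the base copy of `P(u,v,5)` into `T(u,v,k,ℓ+1)`. -/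
def embedP (k ℓ : ℕ) : (Fin 2 ⊕ Fin 5) → TVert k (ℓ + 1)
  | Sum.inl x => Sum.inl x
  | Sum.inr y => Sum.inr (Sum.inl y)

/-- The graph `T(u,v,k,ℓ)`, defined recursively: `T(u,v,k,0) = P(u,v,2^k)`, and
`T(u,v,k,ℓ+1)` is obtained from `P(u,v,5)` by gluing three copies of
`T(·,·,k,ℓ)` onto the pairs `(v₁,v₃)`, `(v₂,v₄)`, `(v₃,v₅)`. -/
def TGraph (k : ℕ) : (ℓ : ℕ) → SimpleGraph (TVert k ℓ)
  | 0 => Pgraph (2 ^ k)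
  | ℓ + 1 => SimpleGraph.fromRel (fun a b =>
      (∃ x y, (Pgraph 5).Adj x y ∧ a = embedP k ℓ x ∧ b = embedP k ℓ y) ∨
      (∃ c x y, (TGraph k ℓ).Adj x y ∧ a = embedT k ℓ c x ∧ b = embedT k ℓ c y))

/-!
Triangle-freeness passes up the recursion: an inner vertex of a glued copy of `T(·,·,k,ℓ)`
only sees vertices of that copy, and the two ends of a glued pair are non-adjacent both in
the copy and in `P(u,v,5)`; so every triangle of `T(u,v,k,ℓ+1)` lies in a copy or in `P(u,v,5)`.

For the colorings, count those with prescribed colors `a, b` of `u, v`. In `P(u,v,m)` every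
`vᵢ` avoids the color of its special neighbor, so there are at most `2^m` of them, and at most
`2` if `a = b`, since then consecutive `vᵢ` determine each other. A coloring of `T(u,v,k,ℓ+1)`
is determined by its restrictions to `P(u,v,5)` (at most `16` of them, `2` if `a = b`) and to
the three copies. In each coloring of `P(u,v,5)` one of the glued pairs `(v₁,v₃)`, `(v₂,v₄)`,
`(v₃,v₅)` is monochromatic, and all three are if `a = b`. Hence the counts are at most `2^X_ℓ`
for `a = b` and `2^Y_ℓ` in general, where `X_{ℓ+1} = 3 X_ℓ + 1`, `Y_{ℓ+1} = 2 Y_ℓ + X_ℓ + 4`,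
`X_0 = 1`, `Y_0 = 2^k`; and `Y_ℓ + 4 ≤ 6·3^ℓ` as soon as `2^(ℓ+k) ≤ 2·3^ℓ`. The choice
`k = ⌈ℓ log₂(3/2)⌉` gives `3^ℓ ≤ 2^(ℓ+k) ≤ 2·3^ℓ`, so there are at most `2^(6·3^ℓ) = 64^(3^ℓ)`
colorings, while the number `n ≥ 3^ℓ 2^k` of vertices is at least `(9/2)^ℓ`, that is,
`3^ℓ ≤ n^(log 3 / log (9/2))`.
-/

open SimpleGraph

theorem fin_three_eq_of_ne {a p q q' : Fin 3} (hp : p ≠ a) (hq : q ≠ a) (hq' : q' ≠ a)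
    (hqp : q ≠ p) (hq'p : q' ≠ p) : q = q' := by
  omega

instance (b : ℕ) : DecidableRel (PAdj b)
  | Sum.inr _, Sum.inr _ | Sum.inl _, Sum.inr _ => inferInstanceAs (Decidable (_ = _))
  | Sum.inl _, Sum.inl _ | Sum.inr _, Sum.inl _ => inferInstanceAs (Decidable False)

instance (b : ℕ) : DecidableRel (Pgraph b).Adj := fun x y =>
  decidable_of_iff _ (fromRel_adj (PAdj b) x y).symm

instance TInner.finite (k : ℕ) : ∀ ℓ, Finite (TInner k ℓ)
  | 0 => inferInstanceAs (Finite (Fin (2 ^ k)))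
  | ℓ + 1 =>
    have := TInner.finite k ℓ
    inferInstanceAs (Finite (Fin 5 ⊕ (Fin 3 × TInner k ℓ)))

theorem pgraph_cliqueFree_three (b : ℕ) : (Pgraph b).CliqueFree 3 := by
  intro s hs
  obtain ⟨x, y, z, hxy, hxz, hyz, rfl⟩ := is3Clique_iff.1 hs
  simp only [Pgraph, fromRel_adj] at hxy hxz hyz
  rcases x with x | i <;> rcases y with y | j <;> rcases z with z | m <;>
    simp [PAdj] at hxy hxz hyz <;> omega

section Pgraph

variable {b : ℕ}

theorem pgraph_not_adj_inl (x y : Fin 2) : ¬ (Pgraph b).Adj (Sum.inl x) (Sum.inl y) := by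
  simp [Pgraph, PAdj]

theorem pgraph_adj_inl_mod_two (i : Fin b) :
    (Pgraph b).Adj (Sum.inl ⟨i % 2, Nat.mod_lt _ two_pos⟩) (Sum.inr i) :=
  (fromRel_adj _ _ _).2 ⟨Sum.inl_ne_inr, .inl rfl⟩

theorem pgraph_adj_inr_succ {i j : Fin b} (h : (j : ℕ) = i + 1) :
    (Pgraph b).Adj (Sum.inr i) (Sum.inr j) :=
  (fromRel_adj _ _ _).2 ⟨fun he => by cases he; omega, .inl h⟩

end Pgraph

def glueVertex (c : Fin 3) (s : Fin 2) : Fin 5 :=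
  if s = 0 then (gluePair c).1 else (gluePair c).2

theorem glueVertex_injective (c : Fin 3) : Function.Injective (glueVertex c) := by
  revert c; decide

theorem pgraph_not_adj_glueVertex (c : Fin 3) (s t : Fin 2) :
    ¬ (Pgraph 5).Adj (Sum.inr (glueVertex c s)) (Sum.inr (glueVertex c t)) := by
  revert c s t; decide

section TGraph

variable {k ℓ : ℕ}

theorem tGraph_succ_adj_cases {a b : TVert k (ℓ + 1)} (h : (TGraph k (ℓ + 1)).Adj a b) :
    (∃ x y, (Pgraph 5).Adj x y ∧ a = embedP k ℓ x ∧ b = embedP k ℓ y) ∨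
    (∃ c x y, (TGraph k ℓ).Adj x y ∧ a = embedT k ℓ c x ∧ b = embedT k ℓ c y) := by
  rw [TGraph, fromRel_adj] at h
  rcases h.2 with h | ⟨x, y, hxy, hb, ha⟩ | ⟨c, x, y, hxy, hb, ha⟩
  · exact h
  · exact .inl ⟨y, x, hxy.symm, ha, hb⟩
  · exact .inr ⟨c, y, x, hxy.symm, ha, hb⟩

theorem tVert_succ_cases (a : TVert k (ℓ + 1)) :
    (∃ c w, a = Sum.inr (Sum.inr (c, w))) ∨ ∃ x, a = embedP k ℓ x := by
  rcases a with s | i | ⟨c, w⟩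
  exacts [.inr ⟨.inl s, rfl⟩, .inr ⟨.inr i, rfl⟩, .inl ⟨c, w, rfl⟩]

theorem embedP_injective : Function.Injective (embedP k ℓ) := by
  rintro (x | x) (y | y) h <;> simp only [embedP, reduceCtorEq] at h
  · rw [Sum.inl.inj h]
  · rw [Sum.inl.inj (Sum.inr.inj h)]

theorem embedT_inl (c : Fin 3) (s : Fin 2) :
    embedT k ℓ c (Sum.inl s) = embedP k ℓ (Sum.inr (glueVertex c s)) := by
  by_cases hs : s = 0 <;> simp [embedT, embedP, glueVertex, hs]

theorem embedT_inr_ne_embedP (c : Fin 3) (w : TInner k ℓ) (x : Fin 2 ⊕ Fin 5) :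
    embedT k ℓ c (Sum.inr w) ≠ embedP k ℓ x := by
  cases x <;> simp [embedT, embedP]
  exact fun h => nomatch Sum.inr.inj h

theorem embedT_injective (c : Fin 3) : Function.Injective (embedT k ℓ c) := by
  rintro (s | w) (t | w') h
  · rw [embedT_inl, embedT_inl] at h
    rw [glueVertex_injective c (Sum.inr_injective (embedP_injective h))]
  · rw [embedT_inl] at h; exact absurd h.symm (embedT_inr_ne_embedP _ _ _)
  · rw [embedT_inl] at h; exact absurd h (embedT_inr_ne_embedP _ _ _)
  · rw [(Prod.mk.inj (Sum.inr.inj (Sum.inr.inj h))).2]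

theorem tGraph_not_adj_inl : ∀ ℓ (x y : Fin 2), ¬ (TGraph k ℓ).Adj (Sum.inl x) (Sum.inl y)
  | 0, x, y => pgraph_not_adj_inl x y
  | ℓ + 1, x, y => fun h => by
    rcases tGraph_succ_adj_cases h with ⟨x', y', hxy, ha, hb⟩ | ⟨c, x', y', hxy, ha, hb⟩
    · rcases x' with s | s
      · rcases y' with t | t
        · exact pgraph_not_adj_inl s t hxy
        · simp [embedP] at hb
      · simp [embedP] at ha
    · rcases x' with s | w
      · rw [embedT_inl] at ha; simp [embedP] at ha
      · simp [embedT] at ha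

theorem tGraph_adj_embedP_iff {x y : Fin 2 ⊕ Fin 5} :
    (TGraph k (ℓ + 1)).Adj (embedP k ℓ x) (embedP k ℓ y) ↔ (Pgraph 5).Adj x y := by
  refine ⟨fun h => ?_, fun h => ?_⟩
  · rcases tGraph_succ_adj_cases h with ⟨x', y', hxy, ha, hb⟩ | ⟨c, x', y', hxy, ha, hb⟩
    · rwa [embedP_injective ha, embedP_injective hb]
    · rcases x' with s | w
      · rcases y' with t | w
        · exact absurd hxy (tGraph_not_adj_inl ℓ s t)
        · exact absurd hb.symm (embedT_inr_ne_embedP _ _ _)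
      · exact absurd ha.symm (embedT_inr_ne_embedP _ _ _)
  · rw [TGraph, fromRel_adj]
    exact ⟨fun he => h.ne (embedP_injective he), .inl (.inl ⟨x, y, h, rfl, rfl⟩)⟩

theorem tGraph_succ_adj_inner {c : Fin 3} {w : TInner k ℓ} {b : TVert k (ℓ + 1)}
    (h : (TGraph k (ℓ + 1)).Adj (Sum.inr (Sum.inr (c, w))) b) :
    ∃ y, (TGraph k ℓ).Adj (Sum.inr w) y ∧ b = embedT k ℓ c y := by
  rcases tGraph_succ_adj_cases h with ⟨x', y', hxy, ha, hb⟩ | ⟨c', x', y', hxy, ha, hb⟩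
  · exact absurd ha (embedT_inr_ne_embedP c w x')
  · rcases x' with s | w'
    · rw [embedT_inl] at ha; exact nomatch Sum.inr.inj ha
    · obtain ⟨rfl, rfl⟩ := Prod.mk.inj (Sum.inr.inj (Sum.inr.inj ha))
      exact ⟨y', hxy, hb⟩

theorem tGraph_adj_embedT_iff {c : Fin 3} {x y : TVert k ℓ} :
    (TGraph k (ℓ + 1)).Adj (embedT k ℓ c x) (embedT k ℓ c y) ↔ (TGraph k ℓ).Adj x y := by
  refine ⟨fun h => ?_, fun h => ?_⟩
  · rcases x with s | w
    · rcases y with t | w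
      · rw [embedT_inl, embedT_inl, tGraph_adj_embedP_iff] at h
        exact absurd h (pgraph_not_adj_glueVertex c s t)
      · obtain ⟨x', hx', hx⟩ := tGraph_succ_adj_inner h.symm
        rwa [embedT_injective c hx, (TGraph k ℓ).adj_comm]
    · obtain ⟨y', hy', hy⟩ := tGraph_succ_adj_inner h
      rwa [embedT_injective c hy]
  · rw [TGraph, fromRel_adj]
    exact ⟨fun he => h.ne (embedT_injective c he), .inl (.inr ⟨c, x, y, h, rfl, rfl⟩)⟩

end TGraph

theorem tGraph_cliqueFree_three (k : ℕ) : ∀ ℓ, (TGraph k ℓ).CliqueFree 3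
  | 0 => pgraph_cliqueFree_three _
  | ℓ + 1 => by
    classical
    have no_inner_triangle : ∀ (c : Fin 3) (w : TInner k ℓ) (b₁ b₂ : TVert k (ℓ + 1)),
        (TGraph k (ℓ + 1)).Adj (Sum.inr (Sum.inr (c, w))) b₁ →
        (TGraph k (ℓ + 1)).Adj (Sum.inr (Sum.inr (c, w))) b₂ →
        ¬ (TGraph k (ℓ + 1)).Adj b₁ b₂ := by
      intro c w b₁ b₂ h₁ h₂ h₁₂
      obtain ⟨y₁, hy₁, rfl⟩ := tGraph_succ_adj_inner h₁
      obtain ⟨y₂, hy₂, rfl⟩ := tGraph_succ_adj_inner h₂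
      exact tGraph_cliqueFree_three k ℓ _
        (is3Clique_triple_iff.2 ⟨hy₁, hy₂, tGraph_adj_embedT_iff.1 h₁₂⟩)
    intro s hs
    obtain ⟨x, y, z, hxy, hxz, hyz, -⟩ := is3Clique_iff.1 hs
    rcases tVert_succ_cases x with ⟨c, w, rfl⟩ | ⟨x, rfl⟩
    · exact no_inner_triangle c w y z hxy hxz hyz
    rcases tVert_succ_cases y with ⟨c, w, rfl⟩ | ⟨y, rfl⟩
    · exact no_inner_triangle c w _ z hxy.symm hyz hxz
    rcases tVert_succ_cases z with ⟨c, w, rfl⟩ | ⟨z, rfl⟩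
    · exact no_inner_triangle c w _ _ hxz.symm hyz.symm hxy
    simp only [tGraph_adj_embedP_iff] at hxy hxz hyz
    exact pgraph_cliqueFree_three 5 _ (is3Clique_triple_iff.2 ⟨hxy, hxz, hyz⟩)

section EndColorings

variable {ι : Type*}

def endColorings (G : SimpleGraph (Fin 2 ⊕ ι)) (a b : Fin 3) : Set (Fin 2 ⊕ ι → Fin 3) :=
  {ψ | ψ ∈ properColorings G ∧ ψ ∘ Sum.inl = ![a, b]}

variable {G : SimpleGraph (Fin 2 ⊕ ι)} {a b : Fin 3} {ψ ψ' : Fin 2 ⊕ ι → Fin 3}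

theorem endColorings_ext (hψ : ψ ∈ endColorings G a b) (hψ' : ψ' ∈ endColorings G a b)
    (h : ∀ i, ψ (Sum.inr i) = ψ' (Sum.inr i)) : ψ = ψ' := by
  funext v
  rcases v with s | i
  exacts [congrFun (hψ.2.trans hψ'.2.symm) s, h i]

theorem apply_inl_of_mem_endColorings_same (hψ : ψ ∈ endColorings G a a) (s : Fin 2) :
    ψ (Sum.inl s) = a :=
  Fin.forall_fin_two (p := fun s => ψ (Sum.inl s) = a) |>.2
    ⟨congrFun hψ.2 0, congrFun hψ.2 1⟩ s

theorem card_properColorings_le_sum [Finite ι] :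
    Nat.card (properColorings G) ≤ ∑ p : Fin 3 × Fin 3, Nat.card (endColorings G p.1 p.2) := by
  let f : properColorings G → Σ p : Fin 3 × Fin 3, endColorings G p.1 p.2 := fun ψ =>
    ⟨(ψ.1 (Sum.inl 0), ψ.1 (Sum.inl 1)), ψ.1, ψ.2, by ext s; fin_cases s <;> rfl⟩
  have hf : f.Injective := fun ψ ψ' h => Subtype.ext (congrArg (fun s => s.2.1) h)
  rw [← Nat.card_sigma]
  exact Nat.card_le_card_of_injective f hf

theorem card_endColorings_le_two_pow [Fintype ι]
    (hG : ∀ i, ∃ s, G.Adj (Sum.inl s) (Sum.inr i)) (a b : Fin 3) :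
    Nat.card (endColorings G a b) ≤ 2 ^ Fintype.card ι := by
  choose s hs using hG
  let f : endColorings G a b → ∀ i, {c : Fin 3 // c ≠ ![a, b] (s i)} := fun ψ i =>
    ⟨ψ.1 (Sum.inr i), fun h => ψ.2.1 _ _ (hs i) (by rw [h, ← ψ.2.2]; rfl)⟩
  have hf : f.Injective := fun ψ ψ' h =>
    Subtype.ext (endColorings_ext ψ.2 ψ'.2 fun i => congrArg Subtype.val (congrFun h i))
  calc Nat.card (endColorings G a b) ≤ Nat.card (∀ i, {c : Fin 3 // c ≠ ![a, b] (s i)}) :=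
        Nat.card_le_card_of_injective f hf
    _ = 2 ^ Fintype.card ι := by simp [Nat.card_pi]

end EndColorings

section PgraphColorings

variable {b : ℕ} {a : Fin 3} {ψ : Fin 2 ⊕ Fin b → Fin 3}

theorem apply_ne_of_mem_endColorings_pgraph_same (hψ : ψ ∈ endColorings (Pgraph b) a a)
    (i : Fin b) : ψ (Sum.inr i) ≠ a := by
  rw [← apply_inl_of_mem_endColorings_same hψ ⟨i % 2, Nat.mod_lt _ two_pos⟩]
  exact (hψ.1 _ _ (pgraph_adj_inl_mod_two i)).symm

theorem apply_eq_of_mem_endColorings_pgraph_same {i j : Fin b} (hij : (j : ℕ) = i + 2)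
    (hψ : ψ ∈ endColorings (Pgraph b) a a) : ψ (Sum.inr i) = ψ (Sum.inr j) := by
  let m : Fin b := ⟨i + 1, by omega⟩
  exact fin_three_eq_of_ne (apply_ne_of_mem_endColorings_pgraph_same hψ m)
    (apply_ne_of_mem_endColorings_pgraph_same hψ i)
    (apply_ne_of_mem_endColorings_pgraph_same hψ j)
    (hψ.1 _ _ (pgraph_adj_inr_succ rfl)) (hψ.1 _ _ (pgraph_adj_inr_succ hij)).symm

theorem card_endColorings_pgraph_same_le (hb : 0 < b) (a : Fin 3) :
    Nat.card (endColorings (Pgraph b) a a) ≤ 2 := by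
  let f : endColorings (Pgraph b) a a → {c : Fin 3 // c ≠ a} := fun ψ =>
    ⟨ψ.1 (Sum.inr ⟨0, hb⟩), apply_ne_of_mem_endColorings_pgraph_same ψ.2 _⟩
  have hf : f.Injective := by
    intro ψ ψ' h
    refine Subtype.ext (endColorings_ext ψ.2 ψ'.2 ?_)
    rintro ⟨i, hi⟩
    induction i with
    | zero => exact congrArg Subtype.val h
    | succ i ih =>
      have hadj : (Pgraph b).Adj (Sum.inr ⟨i, by omega⟩) (Sum.inr ⟨i + 1, hi⟩) :=
        pgraph_adj_inr_succ rfl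
      exact fin_three_eq_of_ne (apply_ne_of_mem_endColorings_pgraph_same ψ.2 _)
        (apply_ne_of_mem_endColorings_pgraph_same ψ.2 _)
        (apply_ne_of_mem_endColorings_pgraph_same ψ'.2 _)
        (ψ.2.1 _ _ hadj).symm ((ih (by omega)) ▸ (ψ'.2.1 _ _ hadj).symm)
  calc Nat.card (endColorings (Pgraph b) a a) ≤ Nat.card {c : Fin 3 // c ≠ a} :=
        Nat.card_le_card_of_injective f hf
    _ = 2 := by simp

end PgraphColorings

def IsP5Coloring (a b : Fin 3) (x : Fin 5 → Fin 3) : Prop :=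
  x 0 ≠ a ∧ x 1 ≠ b ∧ x 2 ≠ a ∧ x 3 ≠ b ∧ x 4 ≠ a ∧
    x 0 ≠ x 1 ∧ x 1 ≠ x 2 ∧ x 2 ≠ x 3 ∧ x 3 ≠ x 4

instance (a b : Fin 3) : DecidablePred (IsP5Coloring a b) := fun _ => by
  unfold IsP5Coloring; infer_instance

section P5Colorings

variable {a b : Fin 3} {ψ : Fin 2 ⊕ Fin 5 → Fin 3}

theorem isP5Coloring_of_mem_endColorings (hψ : ψ ∈ endColorings (Pgraph 5) a b) :
    IsP5Coloring a b (ψ ∘ Sum.inr) := by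
  obtain ⟨hψ, hends⟩ := hψ
  obtain rfl : ψ (Sum.inl 0) = a := congrFun hends 0
  obtain rfl : ψ (Sum.inl 1) = b := congrFun hends 1
  refine ⟨hψ _ _ ?_, hψ _ _ ?_, hψ _ _ ?_, hψ _ _ ?_, hψ _ _ ?_,
    hψ _ _ ?_, hψ _ _ ?_, hψ _ _ ?_, hψ _ _ ?_⟩ <;> decide

theorem card_endColorings_pgraph_five_le (a b : Fin 3) :
    Nat.card (endColorings (Pgraph 5) a b) ≤ 16 := by
  let f : endColorings (Pgraph 5) a b → {x // IsP5Coloring a b x} := fun ψ =>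
    ⟨_, isP5Coloring_of_mem_endColorings ψ.2⟩
  have hf : f.Injective := fun ψ ψ' h =>
    Subtype.ext (endColorings_ext ψ.2 ψ'.2 (congrFun (congrArg Subtype.val h)))
  have key : ∀ a b, Fintype.card {x // IsP5Coloring a b x} ≤ 16 := by decide +kernel
  calc Nat.card (endColorings (Pgraph 5) a b) ≤ Nat.card {x // IsP5Coloring a b x} :=
        Nat.card_le_card_of_injective f hf
    _ ≤ 16 := by rw [Nat.card_eq_fintype_card]; exact key a b

theorem exists_gluePair_eq (hψ : ψ ∈ endColorings (Pgraph 5) a b) :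
    ∃ c, ψ (Sum.inr (gluePair c).1) = ψ (Sum.inr (gluePair c).2) := by
  have key : ∀ a b x, IsP5Coloring a b x → x 0 = x 2 ∨ x 1 = x 3 ∨ x 2 = x 4 := by
    decide +kernel
  rcases key a b _ (isP5Coloring_of_mem_endColorings hψ) with h | h | h
  exacts [⟨0, h⟩, ⟨1, h⟩, ⟨2, h⟩]

end P5Colorings

theorem card_endColorings_tGraph_succ_le {k ℓ : ℕ} {a b : Fin 3} {B : ℕ}
    (hB : ∀ φ ∈ endColorings (Pgraph 5) a b, ∏ c : Fin 3,
      Nat.card (endColorings (TGraph k ℓ) (φ (Sum.inr (gluePair c).1))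
        (φ (Sum.inr (gluePair c).2))) ≤ B) :
    Nat.card (endColorings (TGraph k (ℓ + 1)) a b) ≤
      Nat.card (endColorings (Pgraph 5) a b) * B := by
  classical
  let f : endColorings (TGraph k (ℓ + 1)) a b → Σ φ : endColorings (Pgraph 5) a b,
      ∀ c, endColorings (TGraph k ℓ) (φ.1 (Sum.inr (gluePair c).1))
        (φ.1 (Sum.inr (gluePair c).2)) :=
    fun ψ => ⟨⟨ψ.1 ∘ embedP k ℓ, fun _ _ h => ψ.2.1 _ _ (tGraph_adj_embedP_iff.2 h),
        ψ.2.2⟩,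
      fun c => ⟨ψ.1 ∘ embedT k ℓ c, fun _ _ h => ψ.2.1 _ _ (tGraph_adj_embedT_iff.2 h),
        by ext s; fin_cases s <;> rfl⟩⟩
  have hf : f.Injective := by
    intro ψ ψ' h
    refine Subtype.ext (endColorings_ext ψ.2 ψ'.2 ?_)
    rintro (i | ⟨c, w⟩)
    · exact congrFun (congrArg (fun s => s.1.1) h) (Sum.inr i)
    · exact congrFun (congrArg (fun s => (s.2 c).1) h) (Sum.inr w)
  calc Nat.card (endColorings (TGraph k (ℓ + 1)) a b) ≤ Nat.card _ :=
        Nat.card_le_card_of_injective f hf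
    _ = ∑ φ : endColorings (Pgraph 5) a b, ∏ c : Fin 3, Nat.card (endColorings (TGraph k ℓ)
          (φ.1 (Sum.inr (gluePair c).1)) (φ.1 (Sum.inr (gluePair c).2))) := by
        simp only [Nat.card_sigma, Nat.card_pi]
    _ ≤ ∑ _φ : endColorings (Pgraph 5) a b, B := Finset.sum_le_sum fun φ _ => hB φ.1 φ.2
    _ = Nat.card (endColorings (Pgraph 5) a b) * B := by simp [Nat.card_eq_fintype_card]

def logBoundSame : ℕ → ℕ
  | 0 => 1
  | ℓ + 1 => 3 * logBoundSame ℓ + 1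

def logBound (k : ℕ) : ℕ → ℕ
  | 0 => 2 ^ k
  | ℓ + 1 => 2 * logBound k ℓ + logBoundSame ℓ + 4

theorem card_endColorings_tGraph_same_le (k : ℕ) :
    ∀ ℓ (a : Fin 3), Nat.card (endColorings (TGraph k ℓ) a a) ≤ 2 ^ logBoundSame ℓ
  | 0, a => card_endColorings_pgraph_same_le (by positivity) a
  | ℓ + 1, a => by
    refine (card_endColorings_tGraph_succ_le
      (B := (2 ^ logBoundSame ℓ) ^ 3) fun φ hφ => ?_).trans ?_
    · calc ∏ c : Fin 3, _ ≤ ∏ _c : Fin 3, 2 ^ logBoundSame ℓ :=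
            Finset.prod_le_prod' fun c _ => by
              rw [apply_eq_of_mem_endColorings_pgraph_same (j := (gluePair c).2) rfl hφ]
              exact card_endColorings_tGraph_same_le k ℓ _
        _ = (2 ^ logBoundSame ℓ) ^ 3 := by simp
    · calc _ ≤ 2 * (2 ^ logBoundSame ℓ) ^ 3 :=
            Nat.mul_le_mul_right _ (card_endColorings_pgraph_same_le (by norm_num) a)
        _ = 2 ^ logBoundSame (ℓ + 1) := by rw [logBoundSame]; ring

theorem card_endColorings_tGraph_le (k : ℕ) :
    ∀ ℓ (a b : Fin 3), Nat.card (endColorings (TGraph k ℓ) a b) ≤ 2 ^ logBound k ℓ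
  | 0, a, b =>
    (card_endColorings_le_two_pow (fun i => ⟨_, pgraph_adj_inl_mod_two i⟩) a b).trans_eq
      (by simp [logBound])
  | ℓ + 1, a, b => by
    refine (card_endColorings_tGraph_succ_le
      (B := 2 ^ logBoundSame ℓ * (2 ^ logBound k ℓ) ^ 2) fun φ hφ => ?_).trans ?_
    · obtain ⟨c₀, hc₀⟩ := exists_gluePair_eq hφ
      rw [← Finset.mul_prod_erase _ _ (Finset.mem_univ c₀)]
      gcongr
      · rw [hc₀]; exact card_endColorings_tGraph_same_le k ℓ _
      · exact (Finset.prod_le_pow_card _ _ _ fun c _ =>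
          card_endColorings_tGraph_le k ℓ _ _).trans_eq (by simp)
    · calc _ ≤ 16 * (2 ^ logBoundSame ℓ * (2 ^ logBound k ℓ) ^ 2) :=
            Nat.mul_le_mul_right _ (card_endColorings_pgraph_five_le a b)
        _ = 2 ^ logBound k (ℓ + 1) := by rw [logBound]; ring

theorem two_mul_logBoundSame_add_one : ∀ ℓ, 2 * logBoundSame ℓ + 1 = 3 ^ (ℓ + 1)
  | 0 => rfl
  | ℓ + 1 => by rw [logBoundSame, pow_succ, ← two_mul_logBoundSame_add_one ℓ]; ring

theorem two_mul_logBound_add_seven_le (k : ℕ) :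
    ∀ ℓ, 2 * logBound k ℓ + 7 ≤ 2 ^ (ℓ + 1) * (2 ^ k + 2) + 3 ^ (ℓ + 1)
  | 0 => by simp [logBound]; omega
  | ℓ + 1 => by
    have := two_mul_logBound_add_seven_le k ℓ
    have := two_mul_logBoundSame_add_one ℓ
    rw [logBound, pow_succ 2 (ℓ + 1), pow_succ 3 (ℓ + 1)]
    nlinarith

theorem logBound_add_four_le {k ℓ : ℕ} (h : 2 ^ (ℓ + k) ≤ 2 * 3 ^ ℓ) :
    logBound k ℓ + 4 ≤ 6 * 3 ^ ℓ := by
  have hbound := two_mul_logBound_add_seven_le k ℓ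
  have : 2 ^ ℓ ≤ 3 ^ ℓ := Nat.pow_le_pow_left (by norm_num) ℓ
  rw [pow_add] at h
  rw [pow_succ, pow_succ] at hbound
  nlinarith

theorem card_properColorings_tGraph_le {k ℓ : ℕ} (h : 2 ^ (ℓ + k) ≤ 2 * 3 ^ ℓ) :
    Nat.card (properColorings (TGraph k ℓ)) ≤ 64 ^ 3 ^ ℓ :=
  calc Nat.card (properColorings (TGraph k ℓ))
      ≤ ∑ p : Fin 3 × Fin 3, Nat.card (endColorings (TGraph k ℓ) p.1 p.2) :=
        card_properColorings_le_sum
    _ ≤ ∑ _p : Fin 3 × Fin 3, 2 ^ logBound k ℓ :=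
        Finset.sum_le_sum fun p _ => card_endColorings_tGraph_le k ℓ _ _
    _ ≤ 2 ^ (logBound k ℓ + 4) := by simp [pow_add]; omega
    _ ≤ 2 ^ (6 * 3 ^ ℓ) := Nat.pow_le_pow_right two_pos (logBound_add_four_le h)
    _ = 64 ^ 3 ^ ℓ := by rw [pow_mul]; norm_num

theorem card_tInner_ge (k : ℕ) : ∀ ℓ, 3 ^ ℓ * 2 ^ k ≤ Nat.card (TInner k ℓ)
  | 0 => by simp [TInner]
  | ℓ + 1 => by
    have ih := card_tInner_ge k ℓ
    have hcard : Nat.card (TInner k (ℓ + 1)) = 5 + 3 * Nat.card (TInner k ℓ) := by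
      rw [show TInner k (ℓ + 1) = (Fin 5 ⊕ (Fin 3 × TInner k ℓ)) from rfl, Nat.card_sum,
        Nat.card_prod]
      simp
    rw [hcard, pow_succ]
    nlinarith

theorem card_tVert_ge (k ℓ : ℕ) : 3 ^ ℓ * 2 ^ k ≤ Nat.card (TVert k ℓ) :=
  (card_tInner_ge k ℓ).trans (by rw [Nat.card_sum]; omega)

theorem pow_bounds_of_eq_ceil_logb {k ℓ : ℕ}
    (hk : (k : ℤ) = ⌈(ℓ : ℝ) * Real.logb 2 (3 / 2)⌉) :
    3 ^ ℓ ≤ 2 ^ (ℓ + k) ∧ 2 ^ (ℓ + k) ≤ 2 * 3 ^ ℓ := by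
  rw [← Real.logb_pow, eq_comm, Int.ceil_eq_iff] at hk
  obtain ⟨hlt, hle⟩ := hk
  push_cast at hlt hle
  have hq : (0 : ℝ) < (3 / 2) ^ ℓ := by positivity
  rw [Real.logb_le_iff_le_rpow one_lt_two hq, Real.rpow_natCast] at hle
  rw [Real.lt_logb_iff_rpow_lt one_lt_two hq, Real.rpow_sub_one two_ne_zero,
    Real.rpow_natCast] at hlt
  have h3 : (3 : ℝ) ^ ℓ = 2 ^ ℓ * (3 / 2) ^ ℓ := by rw [← mul_pow]; norm_num
  have h2 : (0 : ℝ) < 2 ^ ℓ := by positivity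
  constructor
  · exact_mod_cast (show (3 : ℝ) ^ ℓ ≤ 2 ^ (ℓ + k) by rw [h3, pow_add]; gcongr)
  · exact_mod_cast (show (2 : ℝ) ^ (ℓ + k) ≤ 2 * 3 ^ ℓ by rw [h3, pow_add]; nlinarith)

theorem nine_halves_pow_le_card_tVert {k ℓ : ℕ} (h : 3 ^ ℓ ≤ 2 ^ (ℓ + k)) :
    (9 / 2 : ℝ) ^ ℓ ≤ Nat.card (TVert k ℓ) := by
  have hnat : 9 ^ ℓ ≤ 2 ^ ℓ * Nat.card (TVert k ℓ) :=
    calc 9 ^ ℓ = 3 ^ ℓ * 3 ^ ℓ := by rw [← mul_pow]; norm_num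
      _ ≤ 3 ^ ℓ * 2 ^ (ℓ + k) := Nat.mul_le_mul_left _ h
      _ = 2 ^ ℓ * (3 ^ ℓ * 2 ^ k) := by ring
      _ ≤ 2 ^ ℓ * Nat.card (TVert k ℓ) := Nat.mul_le_mul_left _ (card_tVert_ge k ℓ)
  rw [div_pow, div_le_iff₀ (by positivity), mul_comm]
  exact_mod_cast hnat

theorem three_pow_le_rpow_of_le {n : ℝ} {ℓ : ℕ} (h : (9 / 2 : ℝ) ^ ℓ ≤ n) :
    (3 : ℝ) ^ ℓ ≤ n ^ (Real.log 3 / Real.log (9 / 2)) :=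
  calc (3 : ℝ) ^ ℓ = ((9 / 2 : ℝ) ^ (Real.log 3 / Real.log (9 / 2))) ^ ℓ := by
        rw [Real.log_div_log, Real.rpow_logb (by norm_num) (by norm_num) (by norm_num)]
    _ = ((9 / 2 : ℝ) ^ ℓ) ^ (Real.log 3 / Real.log (9 / 2)) :=
        Real.rpow_pow_comm (by norm_num) _ _
    _ ≤ n ^ (Real.log 3 / Real.log (9 / 2)) :=
        Real.rpow_le_rpow (by positivity) h
          (div_nonneg (Real.log_nonneg (by norm_num)) (Real.log_nonneg (by norm_num)))

/-- Theorem 1: for every `ℓ ≥ 1`, with `k = ⌈ℓ · log₂(3/2)⌉`, the graph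
`T(u,v,k,ℓ)` is triangle-free and its number `c_ℓ` of proper 3-colorings satisfies
`c_ℓ ≤ 64^(n_ℓ^(log 3 / log (9/2)))` where `n_ℓ` is its number of vertices.
In particular, the set of integers `n` arising as the number of vertices of such
a graph is infinite, so for infinitely many `n` there is an `n`-vertex
triangle-free graph with at most `64^(n^(log 3 / log (9/2)))` proper 3-colorings. -/
theorem stmt15 :
    (∀ ℓ k : ℕ, 1 ≤ ℓ → (k : ℤ) = ⌈(ℓ : ℝ) * Real.logb 2 (3 / 2)⌉ →
      (TGraph k ℓ).CliqueFree 3 ∧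
      (Nat.card {ψ : TVert k ℓ → Fin 3 // ψ ∈ properColorings (TGraph k ℓ)} : ℝ) ≤
        (64 : ℝ) ^ ((Nat.card (TVert k ℓ) : ℝ) ^ (Real.log 3 / Real.log (9 / 2)))) ∧
    {n : ℕ | ∃ ℓ k : ℕ, 1 ≤ ℓ ∧ (k : ℤ) = ⌈(ℓ : ℝ) * Real.logb 2 (3 / 2)⌉ ∧
      n = Nat.card (TVert k ℓ)}.Infinite := by
  refine ⟨fun ℓ k _ hk => ⟨tGraph_cliqueFree_three k ℓ, ?_⟩, ?_⟩
  · obtain ⟨h₁, h₂⟩ := pow_bounds_of_eq_ceil_logb hk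
    calc (Nat.card (properColorings (TGraph k ℓ)) : ℝ) ≤ ((64 ^ 3 ^ ℓ : ℕ) : ℝ) := by
          exact_mod_cast card_properColorings_tGraph_le h₂
      _ = (64 : ℝ) ^ ((3 ^ ℓ : ℕ) : ℝ) := by rw [Real.rpow_natCast]; push_cast; rfl
      _ ≤ _ := Real.rpow_le_rpow_of_exponent_le (by norm_num)
          (by exact_mod_cast three_pow_le_rpow_of_le (nine_halves_pow_le_card_tVert h₁))
  · refine Set.infinite_of_forall_exists_gt fun N => ?_
    obtain ⟨k, hk⟩ :
        ∃ k : ℕ, (k : ℤ) = ⌈((N + 1 : ℕ) : ℝ) * Real.logb 2 (3 / 2)⌉ :=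
      ⟨_, Int.toNat_of_nonneg (Int.ceil_nonneg
        (mul_nonneg (Nat.cast_nonneg _) (Real.logb_nonneg one_lt_two (by norm_num))))⟩
    refine ⟨_, ⟨N + 1, k, N.succ_pos, hk, rfl⟩, ?_⟩
    calc N < 3 ^ (N + 1) := Nat.lt_pow_self (by norm_num) |>.trans
          (Nat.pow_lt_pow_right (by norm_num) N.lt_succ_self)
      _ ≤ 3 ^ (N + 1) * 2 ^ k := Nat.le_mul_of_pos_right _ (by positivity)
      _ ≤ Nat.card (TVert k (N + 1)) := card_tVert_ge k (N + 1)
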